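/- Let W = I + (√(1−γ) − 1) e_i e_iᵀ with γ ∈ (0,1) and μ_i(M) < 1. Then for each j ≠ i, the j-th leverage score of WM equals μ_j(M) + γ μ_{ij}(M)² / (1 − γ μ_i(M)), which is at least μ_j(M). -/

import Mathlib

/-!
Let `P = UUᵀ` and `u = Uᵀ eᵢ`, so `uᵀu = μᵢ`. The column space of `WM` is that of `WU`, whose
orthogonal projection is `WU G⁻¹ UᵀW` with Gram matrix `G = UᵀW²U = 1 - γ u uᵀ`. Sherman–Morrison
gives `G⁻¹ = 1 + γ / (1 - γ μᵢ) u uᵀ`, and since `W` fixes `eⱼ` for `j ≠ i` the `(j, j)` entry of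
the projection is `Pⱼⱼ + γ / (1 - γ μᵢ) Pᵢⱼ²`.
-/

open Matrix

lemma one_add_smul_mul_one_add_smul {K A : Type*} [CommRing K] [Ring A] [Algebra K A] {a : A}
    {μ : K} (ha : a * a = μ • a) (x y : K) :
    (1 + x • a) * (1 + y • a) = 1 + (x + y + x * y * μ) • a := by
  simp only [mul_add, add_mul, one_mul, mul_one, smul_mul_assoc, mul_smul_comm, ha]
  module

/-- Sherman–Morrison, for `a` a multiple of an idempotent (such as `u uᵀ` with `uᵀu = μ`). -/
lemma one_add_div_smul_mul_one_sub_smul {K A : Type*} [Field K] [Ring A] [Algebra K A] {a : A}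
    {μ γ : K} (ha : a * a = μ • a) (h : 1 - γ * μ ≠ 0) :
    (1 + (γ / (1 - γ * μ)) • a) * (1 - γ • a) = 1 := by
  have hcoef : γ / (1 - γ * μ) + -γ + γ / (1 - γ * μ) * -γ * μ = 0 := by
    field_simp
    ring
  rw [show 1 - γ • a = 1 + (-γ) • a by rw [neg_smul, sub_eq_add_neg],
    one_add_smul_mul_one_add_smul ha, hcoef, zero_smul, add_zero]

namespace Matrix

section Projection

variable {R : Type*} [CommRing R] {m n k k' : Type*} [Fintype n] [Fintype k]

lemma range_mulVecLin_mul_le (A : Matrix m n R) (B : Matrix n k R) :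
    LinearMap.range (A * B).mulVecLin ≤ LinearMap.range A.mulVecLin := by
  rw [mulVecLin_mul]
  exact LinearMap.range_comp_le_range _ _

lemma range_mulVecLin_mul_congr_right [Fintype k'] (C : Matrix m n R) {A : Matrix n k R}
    {B : Matrix n k' R}
    (h : LinearMap.range A.mulVecLin = LinearMap.range B.mulVecLin) :
    LinearMap.range (C * A).mulVecLin = LinearMap.range (C * B).mulVecLin := by
  rw [mulVecLin_mul, mulVecLin_mul, LinearMap.range_comp, LinearMap.range_comp, h]

lemma mul_eq_of_isIdempotentElem_of_range_le [Fintype m] {P : Matrix m m R}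
    (hP : IsIdempotentElem P) {B : Matrix m n R}
    (h : LinearMap.range B.mulVecLin ≤ LinearMap.range P.mulVecLin) :
    P * B = B := by
  refine ext_iff_mulVec.2 fun v => ?_
  obtain ⟨w, hw⟩ := h ⟨v, rfl⟩
  simp only [mulVecLin_apply] at hw
  rw [← mulVec_mulVec, ← hw, mulVec_mulVec, hP.eq]

lemma eq_of_isSymm_of_isIdempotentElem_of_range_eq [Fintype m] {P Q : Matrix m m R} (hPs : P.IsSymm)
    (hQs : Q.IsSymm) (hP : IsIdempotentElem P) (hQ : IsIdempotentElem Q)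
    (h : LinearMap.range P.mulVecLin = LinearMap.range Q.mulVecLin) : P = Q :=
  calc P = (Q * P)ᵀ := by rw [mul_eq_of_isIdempotentElem_of_range_le hQ h.le, hPs.eq]
    _ = P * Q := by rw [transpose_mul, hPs.eq, hQs.eq]
    _ = Q := mul_eq_of_isIdempotentElem_of_range_le hP h.ge

section Orthonormal

variable [Fintype m] [DecidableEq k] {U : Matrix m k R}

lemma isIdempotentElem_mul_transpose_self (hU : Uᵀ * U = 1) : IsIdempotentElem (U * Uᵀ) := by
  rw [IsIdempotentElem, Matrix.mul_assoc, ← Matrix.mul_assoc Uᵀ, hU, Matrix.one_mul]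

lemma range_mulVecLin_mul_transpose_self (hU : Uᵀ * U = 1) :
    LinearMap.range (U * Uᵀ).mulVecLin = LinearMap.range U.mulVecLin := by
  refine (range_mulVecLin_mul_le _ _).antisymm ?_
  calc LinearMap.range U.mulVecLin
      = LinearMap.range (U * Uᵀ * U).mulVecLin := by rw [Matrix.mul_assoc, hU, Matrix.mul_one]
    _ ≤ _ := range_mulVecLin_mul_le _ _

end Orthonormal

section GramInverse

variable [Fintype m] [DecidableEq k] {V : Matrix m k R} {B : Matrix k k R}

lemma isSymm_mul_mul_transpose_of_mul_gram_eq_one (hB : B * (Vᵀ * V) = 1) :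
    (V * B * Vᵀ).IsSymm := by
  have hBs : Bᵀ = B := by
    rw [← inv_eq_left_inv hB, transpose_nonsing_inv, transpose_mul, transpose_transpose]
  rw [IsSymm, transpose_mul, transpose_mul, transpose_transpose, hBs, Matrix.mul_assoc]

lemma isIdempotentElem_mul_mul_transpose_of_mul_gram_eq_one (hB : B * (Vᵀ * V) = 1) :
    IsIdempotentElem (V * B * Vᵀ) := by
  rw [IsIdempotentElem]
  calc V * B * Vᵀ * (V * B * Vᵀ) = V * (B * (Vᵀ * V)) * B * Vᵀ := by
        simp only [Matrix.mul_assoc]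
    _ = V * B * Vᵀ := by rw [hB, Matrix.mul_one]

lemma range_mulVecLin_mul_mul_transpose_of_mul_gram_eq_one (hB : B * (Vᵀ * V) = 1) :
    LinearMap.range (V * B * Vᵀ).mulVecLin = LinearMap.range V.mulVecLin := by
  refine le_antisymm ?_ ?_
  · rw [Matrix.mul_assoc]
    exact range_mulVecLin_mul_le _ _
  · calc LinearMap.range V.mulVecLin
        = LinearMap.range (V * B * Vᵀ * V).mulVecLin := by
          rw [Matrix.mul_assoc, Matrix.mul_assoc, hB, Matrix.mul_one]
      _ ≤ _ := range_mulVecLin_mul_le _ _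

/-- `B` is forced to be `(VᵀV)⁻¹`, so this is the familiar formula `V (VᵀV)⁻¹ Vᵀ` for the
orthogonal projection onto the range of `V`. -/
theorem mul_transpose_eq_of_range_eq [Fintype k'] [DecidableEq k'] {U : Matrix m k' R}
    (hU : Uᵀ * U = 1) (hB : B * (Vᵀ * V) = 1)
    (h : LinearMap.range U.mulVecLin = LinearMap.range V.mulVecLin) :
    U * Uᵀ = V * B * Vᵀ :=
  eq_of_isSymm_of_isIdempotentElem_of_range_eq (by rw [IsSymm, transpose_mul, transpose_transpose])
    (isSymm_mul_mul_transpose_of_mul_gram_eq_one hB) (isIdempotentElem_mul_transpose_self hU)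
    (isIdempotentElem_mul_mul_transpose_of_mul_gram_eq_one hB)
    (by rw [range_mulVecLin_mul_transpose_self hU,
      range_mulVecLin_mul_mul_transpose_of_mul_gram_eq_one hB, h])

end GramInverse

end Projection

section RankOne

variable {R : Type*} [CommRing R] {m n : Type*} [DecidableEq n]

lemma mul_single_mul_apply [Fintype m] [Fintype n] (P : Matrix m n R) (Q : Matrix n m R) (i : n)
    (a b : m) : (P * single i i (1 : R) * Q) a b = P a i * Q i b := by
  have hoff : ∀ c ≠ i, (P * single i i (1 : R)) a c * Q c b = 0 := fun c hc => by
    rw [mul_single_apply_of_ne _ _ _ _ _ hc, zero_mul]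
  rw [mul_apply, Finset.sum_eq_single i (fun c _ => hoff c) (by simp), mul_single_apply_same,
    mul_one]

lemma one_add_smul_single_mul_apply_of_ne [Fintype n] {i j : n} (hij : j ≠ i) (t : R)
    (Y : Matrix n m R) (b : m) :
    ((1 + t • single i i 1 : Matrix n n R) * Y : Matrix n m R) j b = Y j b := by
  simp [Matrix.add_mul, hij]

lemma mul_one_add_smul_single_apply_of_ne [Fintype n] {i j : n} (hij : j ≠ i) (t : R)
    (Y : Matrix m n R) (a : m) :
    (Y * (1 + t • single i i 1 : Matrix n n R) : Matrix m n R) a j = Y a j := by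
  simp [Matrix.mul_add, hij]

lemma transpose_one_add_smul_single (i : n) (t : R) :
    (1 + t • single i i (1 : R))ᵀ = 1 + t • single i i 1 := by
  rw [transpose_add, transpose_one, transpose_smul, transpose_single]

variable [Fintype n] [Fintype m]

lemma transpose_mul_single_mul_mul_self (U : Matrix n m R) (i : n) :
    (Uᵀ * single i i (1 : R) * U) * (Uᵀ * single i i (1 : R) * U) =
      (U * Uᵀ) i i • (Uᵀ * single i i (1 : R) * U) :=
  calc (Uᵀ * single i i (1 : R) * U) * (Uᵀ * single i i (1 : R) * U)
      = Uᵀ * (single i i (1 : R) * (U * Uᵀ) * single i i (1 : R)) * U := by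
        simp only [Matrix.mul_assoc]
    _ = (U * Uᵀ) i i • (Uᵀ * single i i (1 : R) * U) := by
      rw [single_mul_mul_single, one_mul, mul_one, ← mul_one ((U * Uᵀ) i i), ← smul_eq_mul,
        ← smul_single, Matrix.mul_smul, Matrix.smul_mul, smul_eq_mul, mul_one]

lemma mul_one_add_smul_transpose_mul_single_mul_mul_transpose_apply [DecidableEq m]
    (U : Matrix n m R) (c : R) (i j : n) :
    (U * (1 + c • (Uᵀ * single i i (1 : R) * U)) * Uᵀ : Matrix n n R) j j =
      (U * Uᵀ) j j + c * (U * Uᵀ) i j ^ 2 := by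
  have hsymm : (U * Uᵀ).IsSymm := by rw [IsSymm, transpose_mul, transpose_transpose]
  rw [Matrix.mul_add, Matrix.mul_one, Matrix.add_mul, Matrix.mul_smul, Matrix.smul_mul,
    show U * (Uᵀ * single i i (1 : R) * U) * Uᵀ = U * Uᵀ * single i i (1 : R) * (U * Uᵀ) by
      simp only [Matrix.mul_assoc],
    add_apply, smul_apply, mul_single_mul_apply, hsymm.apply i j, smul_eq_mul]
  ring

end RankOne

end Matrix

/-- Rank-one row weighting: scaling row `i` of `M` by `√(1-γ)` changes the `j`-th
(`j ≠ i`) leverage score to `μ_j + γ μ_{ij}² / (1 - γ μ_i)`, which is at least `μ_j`. -/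
theorem leverage_after_row_weighting_other (n₁ n₂ k k' : ℕ)
    (M : Matrix (Fin n₁) (Fin n₂) ℝ) (γ : ℝ) (i j : Fin n₁) (hij : j ≠ i)
    (hγ0 : 0 < γ) (hγ1 : γ < 1)
    (U : Matrix (Fin n₁) (Fin k) ℝ) (U' : Matrix (Fin n₁) (Fin k') ℝ)
    (hU : Uᵀ * U = 1)
    (hspan : LinearMap.range U.mulVecLin = LinearMap.range M.mulVecLin)
    (hμ : (U * Uᵀ) i i < 1)
    (W : Matrix (Fin n₁) (Fin n₁) ℝ)
    (hW : W = 1 + (Real.sqrt (1 - γ) - 1) • single i i (1 : ℝ))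
    (hU' : U'ᵀ * U' = 1)
    (hspan' : LinearMap.range U'.mulVecLin = LinearMap.range (W * M).mulVecLin) :
    (U' * U'ᵀ) j j
        = (U * Uᵀ) j j + γ * ((U * Uᵀ) i j) ^ 2 / (1 - γ * (U * Uᵀ) i i) ∧
      (U * Uᵀ) j j ≤ (U' * U'ᵀ) j j := by
  set E := single i i (1 : ℝ)
  set A := Uᵀ * E * U
  set c := γ / (1 - γ * (U * Uᵀ) i i)
  have hpos : 0 < 1 - γ * (U * Uᵀ) i i := by nlinarith
  have hWt : Wᵀ = W := by rw [hW, transpose_one_add_smul_single]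
  have hWW : W * W = 1 - γ • E := by
    have hs : (√(1 - γ) - 1) + (√(1 - γ) - 1) + (√(1 - γ) - 1) * (√(1 - γ) - 1) * 1 = -γ := by
      nlinarith [Real.sq_sqrt (sub_nonneg.2 hγ1.le)]
    rw [hW, one_add_smul_mul_one_add_smul (by rw [single_mul_single_same, one_mul, one_smul]),
      hs, neg_smul, sub_eq_add_neg]
  have hgram : (W * U)ᵀ * (W * U) = 1 - γ • A := by
    rw [transpose_mul, hWt, show Uᵀ * W * (W * U) = Uᵀ * (W * W) * U by
        simp only [Matrix.mul_assoc],
      hWW, Matrix.mul_sub, Matrix.sub_mul, Matrix.mul_one, hU, Matrix.mul_smul, Matrix.smul_mul]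
  have hinv : (1 + c • A) * ((W * U)ᵀ * (W * U)) = 1 := by
    rw [hgram]
    exact one_add_div_smul_mul_one_sub_smul (transpose_mul_single_mul_mul_self U i) hpos.ne'
  have hproj : U' * U'ᵀ = W * U * (1 + c • A) * (W * U)ᵀ :=
    mul_transpose_eq_of_range_eq hU' hinv
      (hspan'.trans (range_mulVecLin_mul_congr_right W hspan.symm))
  have hentry : (U' * U'ᵀ) j j = (U * Uᵀ) j j + c * (U * Uᵀ) i j ^ 2 := by
    rw [hproj, transpose_mul, hWt, show W * U * (1 + c • A) * (Uᵀ * W) =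
        W * (U * (1 + c • A) * Uᵀ * W) by simp only [Matrix.mul_assoc], hW,
      one_add_smul_single_mul_apply_of_ne hij, mul_one_add_smul_single_apply_of_ne hij,
      mul_one_add_smul_transpose_mul_single_mul_mul_transpose_apply]
  refine ⟨by rw [hentry]; ring, ?_⟩
  rw [hentry]
  exact le_add_of_nonneg_right (mul_nonneg (div_pos hγ0 hpos).le (sq_nonneg _))
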